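/- arXiv:1909.11821 — 5 statements merged into one kernel-verified Lean document; each statement's English description precedes it below -/
import Mathlib

section
/- Uniqueness of the Bellman flow fixed point: for finite state and action spaces and γ ∈ (0,1), the system x(s,a) = π(a|s)[(1−γ)α(s) + γ ∑_{s',a'} x(s',a') T(s|s',a')], x(s,a) ≥ 0, has a unique solution, namely the occupancy measure ρ_T^{α,π}. -/
variable {S A : Type*} [Fintype S] [Fintype A]

/-- The law of the state-action pair `(s_t, a_t)` of the Markov chain induced by
initial distribution `α`, policy `π` (with `π s a = π(a|s)`) and transition
kernel `T` (with `T s a s' = T(s'|s,a)`). -/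
def law (α : S → ℝ) (π : S → A → ℝ) (T : S → A → S → ℝ) : ℕ → S → A → ℝ
  | 0 => fun s a => α s * π s a
  | (t + 1) => fun s a => π s a * ∑ s', ∑ a', law α π T t s' a' * T s' a' s

/-- The normalized occupancy measure `ρ(s,a) = (1-γ) ∑_t γ^t P(s_t = s, a_t = a)`. -/
noncomputable def occ (γ : ℝ) (α : S → ℝ) (π : S → A → ℝ) (T : S → A → S → ℝ)
    (s : S) (a : A) : ℝ :=
  (1 - γ) * ∑' t : ℕ, γ ^ t * law α π T t s a

section aux
variable (α : S → ℝ) (π : S → A → ℝ) (T : S → A → S → ℝ)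
variable (hα : ∀ s, 0 ≤ α s) (hαsum : ∑ s, α s = 1)
    (hπ : ∀ s a, 0 ≤ π s a) (hπsum : ∀ s, ∑ a, π s a = 1)
    (hT : ∀ s a s', 0 ≤ T s a s') (hTsum : ∀ s a, ∑ s', T s a s' = 1)

include hα hπ hT in
lemma law_nonneg : ∀ t s a, 0 ≤ law α π T t s a := by
  intro t
  induction t with
  | zero => intro s a; exact mul_nonneg (hα s) (hπ s a)
  | succ t ih =>
    intro s a
    exact mul_nonneg (hπ s a) (Finset.sum_nonneg fun s' _ =>
      Finset.sum_nonneg fun a' _ => mul_nonneg (ih s' a') (hT s' a' s))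

include hα hαsum hπ hπsum hT hTsum in
lemma law_sum : ∀ t, ∑ s, ∑ a, law α π T t s a = 1 := by
  intro t
  induction t with
  | zero =>
    simp only [law]
    calc ∑ s, ∑ a, α s * π s a = ∑ s, α s * ∑ a, π s a := by
          simp [Finset.mul_sum]
      _ = 1 := by simp [hπsum, hαsum]
  | succ t ih =>
    simp only [law]
    calc ∑ s, ∑ a, π s a * ∑ s', ∑ a', law α π T t s' a' * T s' a' s
        = ∑ s, (∑ a, π s a) * ∑ s', ∑ a', law α π T t s' a' * T s' a' s := by
          simp [Finset.sum_mul]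
      _ = ∑ s, ∑ s', ∑ a', law α π T t s' a' * T s' a' s := by simp [hπsum]
      _ = ∑ s', ∑ a', law α π T t s' a' * ∑ s, T s' a' s := by
          rw [Finset.sum_comm]
          congr 1; ext s'
          rw [Finset.sum_comm]
          congr 1; ext a'
          rw [Finset.mul_sum]
      _ = 1 := by simp [hTsum, ih]

include hα hαsum hπ hπsum hT hTsum in
lemma law_le_one : ∀ t s a, law α π T t s a ≤ 1 := by
  intro t s a
  calc law α π T t s a ≤ ∑ s', ∑ a', law α π T t s' a' := by
        refine Finset.single_le_sum (f := fun s' => ∑ a', law α π T t s' a') ?_ (Finset.mem_univ s) |>.trans_eq rfl |>.trans' ?_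
        · intro i _
          exact Finset.sum_nonneg fun a' _ => law_nonneg α π T hα hπ hT t i a'
        · exact Finset.single_le_sum (fun a' _ => law_nonneg α π T hα hπ hT t s a') (Finset.mem_univ a)
    _ = 1 := law_sum α π T hα hαsum hπ hπsum hT hTsum t

include hα hαsum hπ hπsum hT hTsum in
lemma summable_law {γ : ℝ} (hγ0 : 0 < γ) (hγ1 : γ < 1) (s : S) (a : A) :
    Summable (fun t => γ ^ t * law α π T t s a) := by
  refine Summable.of_nonneg_of_le (fun t => mul_nonneg (pow_nonneg hγ0.le t)
    (law_nonneg α π T hα hπ hT t s a)) (fun t => ?_) (summable_geometric_of_lt_one hγ0.le hγ1)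
  calc γ ^ t * law α π T t s a ≤ γ ^ t * 1 :=
        mul_le_mul_of_nonneg_left (law_le_one α π T hα hαsum hπ hπsum hT hTsum t s a)
          (pow_nonneg hγ0.le t)
    _ = γ ^ t := mul_one _

include hα hαsum hπ hπsum hT hTsum in
lemma occ_flow {γ : ℝ} (hγ0 : 0 < γ) (hγ1 : γ < 1) (s : S) (a : A) :
    occ γ α π T s a
      = π s a * ((1 - γ) * α s + γ * ∑ s', ∑ a', occ γ α π T s' a' * T s' a' s) := by
  have hsum : ∀ s a, Summable (fun t => γ ^ t * law α π T t s a) :=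
    summable_law α π T hα hαsum hπ hπsum hT hTsum hγ0 hγ1
  have key : (∑' t : ℕ, γ ^ t * law α π T t s a)
      = α s * π s a + γ * (π s a * ∑ s', ∑ a', (∑' t : ℕ, γ ^ t * law α π T t s' a') * T s' a' s) := by
    rw [Summable.tsum_eq_zero_add (hsum s a)]
    have htail : (∑' t : ℕ, γ ^ (t + 1) * law α π T (t + 1) s a)
        = γ * (π s a * ∑ s', ∑ a', (∑' t : ℕ, γ ^ t * law α π T t s' a') * T s' a' s) := by
      have h1 : ∀ t : ℕ, γ ^ (t + 1) * law α π T (t + 1) s a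
          = γ * (π s a * ∑ s', ∑ a', (γ ^ t * law α π T t s' a') * T s' a' s) := by
        intro t
        simp only [law, Finset.mul_sum]
        exact Finset.sum_congr rfl fun s' _ => Finset.sum_congr rfl fun a' _ => by ring
      rw [tsum_congr h1, tsum_mul_left, tsum_mul_left]
      congr 2
      rw [Summable.tsum_finsetSum (fun s' _ => summable_sum fun a' _ => (hsum s' a').mul_right _)]
      refine Finset.sum_congr rfl fun s' _ => ?_
      rw [Summable.tsum_finsetSum (fun a' _ => (hsum s' a').mul_right _)]
      exact Finset.sum_congr rfl fun a' _ => tsum_mul_right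
    rw [htail]
    simp [law]
  have hS : ∑ s', ∑ a', occ γ α π T s' a' * T s' a' s
      = (1 - γ) * ∑ s', ∑ a', (∑' t : ℕ, γ ^ t * law α π T t s' a') * T s' a' s := by
    simp only [occ]
    rw [Finset.mul_sum]
    exact Finset.sum_congr rfl fun s' _ => by
      rw [Finset.mul_sum]
      exact Finset.sum_congr rfl fun a' _ => by ring
  rw [hS]
  simp only [occ]
  rw [key]
  ring
end aux


/-- Uniqueness of the Bellman flow fixed point: any nonnegative solution of the
Bellman flow equations equals the occupancy measure. -/
theorem bellman_flow_unique
    (γ : ℝ) (hγ0 : 0 < γ) (hγ1 : γ < 1)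
    (α : S → ℝ) (π : S → A → ℝ) (T : S → A → S → ℝ)
    (hα : ∀ s, 0 ≤ α s) (hαsum : ∑ s, α s = 1)
    (hπ : ∀ s a, 0 ≤ π s a) (hπsum : ∀ s, ∑ a, π s a = 1)
    (hT : ∀ s a s', 0 ≤ T s a s') (hTsum : ∀ s a, ∑ s', T s a s' = 1)
    (x : S → A → ℝ) (hx : ∀ s a, 0 ≤ x s a)
    (hflow : ∀ s a, x s a
      = π s a * ((1 - γ) * α s + γ * ∑ s', ∑ a', x s' a' * T s' a' s)) :
    x = occ γ α π T := by
  have hocc := occ_flow α π T hα hαsum hπ hπsum hT hTsum hγ0 hγ1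
  have hf : ∀ s a, x s a - occ γ α π T s a
      = γ * π s a * ∑ s', ∑ a', (x s' a' - occ γ α π T s' a') * T s' a' s := by
    intro s a
    have hsub : ∑ s', ∑ a', (x s' a' - occ γ α π T s' a') * T s' a' s
        = (∑ s', ∑ a', x s' a' * T s' a' s) - ∑ s', ∑ a', occ γ α π T s' a' * T s' a' s := by
      simp [sub_mul, Finset.sum_sub_distrib]
    rw [hflow s a, hocc s a, hsub]
    ring
  set N := ∑ s, ∑ a, |x s a - occ γ α π T s a| with hNdef
  have habs_nn : ∀ s a, (0:ℝ) ≤ |x s a - occ γ α π T s a| := fun s a => abs_nonneg _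
  have hN0 : 0 ≤ N := Finset.sum_nonneg fun s _ => Finset.sum_nonneg fun a _ => habs_nn s a
  have hNle : N ≤ γ * N := by
    calc N = ∑ s, ∑ a, |γ * π s a * ∑ s', ∑ a', (x s' a' - occ γ α π T s' a') * T s' a' s| := by
          exact Finset.sum_congr rfl fun s _ => Finset.sum_congr rfl fun a _ => by rw [hf s a]
      _ ≤ ∑ s, ∑ a, γ * π s a * ∑ s', ∑ a', |x s' a' - occ γ α π T s' a'| * T s' a' s := by
          refine Finset.sum_le_sum fun s _ => Finset.sum_le_sum fun a _ => ?_
          rw [abs_mul, abs_mul, abs_of_nonneg hγ0.le, abs_of_nonneg (hπ s a), mul_assoc, mul_assoc]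
          refine mul_le_mul_of_nonneg_left (mul_le_mul_of_nonneg_left ?_ (hπ s a)) hγ0.le
          calc |∑ s', ∑ a', (x s' a' - occ γ α π T s' a') * T s' a' s|
              ≤ ∑ s', |∑ a', (x s' a' - occ γ α π T s' a') * T s' a' s| :=
                Finset.abs_sum_le_sum_abs _ _
            _ ≤ ∑ s', ∑ a', |(x s' a' - occ γ α π T s' a') * T s' a' s| :=
                Finset.sum_le_sum fun s' _ => Finset.abs_sum_le_sum_abs _ _
            _ = ∑ s', ∑ a', |x s' a' - occ γ α π T s' a'| * T s' a' s :=
                Finset.sum_congr rfl fun s' _ => Finset.sum_congr rfl fun a' _ => by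
                  rw [abs_mul, abs_of_nonneg (hT s' a' s)]
      _ = γ * ∑ s, (∑ a, π s a) * ∑ s', ∑ a', |x s' a' - occ γ α π T s' a'| * T s' a' s := by
          rw [Finset.mul_sum]
          refine Finset.sum_congr rfl fun s _ => ?_
          rw [Finset.sum_mul, Finset.mul_sum]
          exact Finset.sum_congr rfl fun a _ => by ring
      _ = γ * ∑ s, ∑ s', ∑ a', |x s' a' - occ γ α π T s' a'| * T s' a' s := by
          simp [hπsum]
      _ = γ * ∑ s', ∑ a', |x s' a' - occ γ α π T s' a'| * ∑ s, T s' a' s := by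
          congr 1
          rw [Finset.sum_comm]
          refine Finset.sum_congr rfl fun s' _ => ?_
          rw [Finset.sum_comm]
          refine Finset.sum_congr rfl fun a' _ => ?_
          rw [Finset.mul_sum]
      _ = γ * N := by simp [hTsum, hNdef]
  have hN : N = 0 := by nlinarith
  have hz := (Finset.sum_eq_zero_iff_of_nonneg
    (fun s _ => Finset.sum_nonneg fun a _ => habs_nn s a)).mp hN
  funext s a
  have hz2 := (Finset.sum_eq_zero_iff_of_nonneg (fun a _ => habs_nn s a)).mp
    (hz s (Finset.mem_univ s)) a (Finset.mem_univ a)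
  have := abs_eq_zero.mp hz2
  linarith
end

section
/- One-to-one correspondence between policies and occupancy measures: if ρ is the occupancy measure generated by (α, π, T), then π is recovered by π(a|s) = ρ(s,a) / ∑_{a'} ρ(s,a') for every s with ∑_{a'} ρ(s,a') > 0; consequently two policies producing the same occupancy measure agree on all states visited with positive probability. -/
variable {S A : Type*} [Fintype S] [Fintype A]

lemma law_factor (α : S → ℝ) (π : S → A → ℝ) (T : S → A → S → ℝ)
    (hπsum : ∀ s, ∑ a, π s a = 1) (t : ℕ) (s : S) (a : A) :
    law α π T t s a = π s a * ∑ a', law α π T t s a' := by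
  cases t with
  | zero => simp [law, ← Finset.mul_sum, hπsum s, mul_comm]
  | succ t =>
      simp only [law]
      rw [← Finset.sum_mul, hπsum s, one_mul]

lemma occ_factor (γ : ℝ) (α : S → ℝ) (π : S → A → ℝ) (T : S → A → S → ℝ)
    (hπsum : ∀ s, ∑ a, π s a = 1) (s : S) (a : A) :
    occ γ α π T s a
      = π s a * ((1 - γ) * ∑' t : ℕ, γ ^ t * ∑ a', law α π T t s a') := by
  unfold occ
  have h : ∀ t : ℕ, γ ^ t * law α π T t s a
      = π s a * (γ ^ t * ∑ a', law α π T t s a') := by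
    intro t
    rw [law_factor α π T hπsum t s a]
    ring
  simp_rw [h]
  rw [tsum_mul_left]
  ring

lemma occ_sum (γ : ℝ) (α : S → ℝ) (π : S → A → ℝ) (T : S → A → S → ℝ)
    (hπsum : ∀ s, ∑ a, π s a = 1) (s : S) :
    ∑ a, occ γ α π T s a
      = (1 - γ) * ∑' t : ℕ, γ ^ t * ∑ a', law α π T t s a' := by
  have h : ∀ a ∈ Finset.univ, occ γ α π T s a
      = π s a * ((1 - γ) * ∑' t : ℕ, γ ^ t * ∑ a', law α π T t s a') :=
    fun a _ => occ_factor γ α π T hπsum s a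
  rw [Finset.sum_congr rfl h, ← Finset.sum_mul, hπsum s, one_mul]

/-- One-to-one correspondence between policies and occupancy measures: the policy
is recovered from the occupancy measure by `π(a|s) = ρ(s,a) / ∑_{a'} ρ(s,a')` at
every state with positive visitation probability; consequently two policies with
the same occupancy measure agree on all such states. -/
theorem policy_occupancy_correspondence
    (γ : ℝ) (hγ0 : 0 < γ) (hγ1 : γ < 1)
    (α : S → ℝ) (π π' : S → A → ℝ) (T : S → A → S → ℝ)
    (hα : ∀ s, 0 ≤ α s) (hαsum : ∑ s, α s = 1)
    (hπ : ∀ s a, 0 ≤ π s a) (hπsum : ∀ s, ∑ a, π s a = 1)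
    (hπ' : ∀ s a, 0 ≤ π' s a) (hπ'sum : ∀ s, ∑ a, π' s a = 1)
    (hT : ∀ s a s', 0 ≤ T s a s') (hTsum : ∀ s a, ∑ s', T s a s' = 1) :
    (∀ s a, 0 < ∑ a', occ γ α π T s a' →
        π s a = occ γ α π T s a / ∑ a', occ γ α π T s a') ∧
    (occ γ α π T = occ γ α π' T →
      ∀ s, 0 < ∑ a', occ γ α π T s a' → ∀ a, π s a = π' s a) := by
  have key : ∀ (π : S → A → ℝ), (∀ s, ∑ a, π s a = 1) →
      ∀ s a, 0 < ∑ a', occ γ α π T s a' →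
        π s a = occ γ α π T s a / ∑ a', occ γ α π T s a' := by
    intro π hπsum s a hpos
    rw [occ_factor γ α π T hπsum s a, ← occ_sum γ α π T hπsum s]
    field_simp
  refine ⟨key π hπsum, fun heq s hpos a => ?_⟩
  have hpos' : 0 < ∑ a', occ γ α π' T s a' := by rw [← heq]; exact hpos
  rw [key π hπsum s a hpos, key π' hπ'sum s a hpos', heq]
end

section
/- Consistency for WGAN (discrete version): suppose ρ(s,a)T(s'|s,a) = ρ'(s,a)T'(s'|s,a) for all (s,a,s'), where ρ = ρ_T^{α,π} and ρ' = ρ_{T'}^{α,π} are the occupancy measures induced by the same α, π with transitions T and T'. Then ρ = ρ' and T(s'|s,a) = T'(s'|s,a) for every (s,a) in the support of ρ. -/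
variable {S A : Type*} [Fintype S] [Fintype A]

/-- Consistency for WGAN (discrete version): if the joint laws of `(s,a,s')`
under the occupancy measures of `T` and `T'` coincide, then the occupancy
measures coincide and `T = T'` on the support of the occupancy measure. -/
theorem wgan_consistency
    (γ : ℝ) (hγ0 : 0 < γ) (hγ1 : γ < 1)
    (α : S → ℝ) (π : S → A → ℝ) (T T' : S → A → S → ℝ)
    (hα : ∀ s, 0 ≤ α s) (hαsum : ∑ s, α s = 1)
    (hπ : ∀ s a, 0 ≤ π s a) (hπsum : ∀ s, ∑ a, π s a = 1)
    (hT : ∀ s a s', 0 ≤ T s a s') (hTsum : ∀ s a, ∑ s', T s a s' = 1)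
    (hT' : ∀ s a s', 0 ≤ T' s a s') (hT'sum : ∀ s a, ∑ s', T' s a s' = 1)
    (hjoint : ∀ s a s', occ γ α π T s a * T s a s'
      = occ γ α π T' s a * T' s a s') :
    occ γ α π T = occ γ α π T' ∧
    ∀ s a, 0 < occ γ α π T s a → ∀ s', T s a s' = T' s a s' := by
  have hocc : ∀ s a, occ γ α π T s a = occ γ α π T' s a := by
    intro s a
    have h : ∑ s' : S, occ γ α π T s a * T s a s' = ∑ s' : S, occ γ α π T' s a * T' s a s' := Finset.sum_congr rfl (fun s' _ => hjoint s a s')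
    rwa [← Finset.mul_sum, ← Finset.mul_sum, hTsum, hT'sum, mul_one, mul_one] at h
  refine ⟨funext fun s => funext fun a => hocc s a, fun s a hpos s' => ?_⟩
  have h := hjoint s a s'
  rw [← hocc s a] at h
  exact mul_left_cancel₀ (ne_of_gt hpos) h
end

section
/- Error bound for WGAN (discrete version with TV distance): if the joint laws p(s,a,s') = ρ_T(s,a)T(s'|s,a) and p'(s,a,s') = ρ_{T'}(s,a)T'(s'|s,a) satisfy D_TV(p, p') ≤ ε, and the reward satisfies |r(s,a)| ≤ M for all (s,a), then |R(π,T) − R(π,T')| ≤ 2εM/(1−γ). -/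
variable {S A : Type*} [Fintype S] [Fintype A]

/-- Error bound for WGAN (discrete version, total variation): if the joint laws
`p(s,a,s') = ρ_T(s,a)·T(s'|s,a)` and `p'(s,a,s') = ρ_{T'}(s,a)·T'(s'|s,a)` are
within TV distance ε and `|r| ≤ M`, then the cumulative rewards differ by at
most `2εM/(1-γ)`. -/
theorem wgan_error_bound_tv
    (γ : ℝ) (hγ0 : 0 < γ) (hγ1 : γ < 1)
    (α : S → ℝ) (π : S → A → ℝ) (T T' : S → A → S → ℝ)
    (hα : ∀ s, 0 ≤ α s) (hαsum : ∑ s, α s = 1)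
    (hπ : ∀ s a, 0 ≤ π s a) (hπsum : ∀ s, ∑ a, π s a = 1)
    (hT : ∀ s a s', 0 ≤ T s a s') (hTsum : ∀ s a, ∑ s', T s a s' = 1)
    (hT' : ∀ s a s', 0 ≤ T' s a s') (hT'sum : ∀ s a, ∑ s', T' s a s' = 1)
    (r : S → A → ℝ) (M : ℝ) (hr : ∀ s a, |r s a| ≤ M)
    (ε : ℝ)
    (hTV : (1 / 2) * ∑ s, ∑ a, ∑ s',
        |occ γ α π T s a * T s a s' - occ γ α π T' s a * T' s a s'| ≤ ε) :
    |(1 / (1 - γ)) * ∑ s, ∑ a, r s a * occ γ α π T s a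
      - (1 / (1 - γ)) * ∑ s, ∑ a, r s a * occ γ α π T' s a|
      ≤ 2 * ε * M / (1 - γ) := by

  have hS : Nonempty S := by
    by_contra h
    rw [not_nonempty_iff] at h
    rw [Finset.univ_eq_empty, Finset.sum_empty] at hαsum; norm_num at hαsum
  obtain ⟨s0⟩ := hS
  have hA : Nonempty A := by
    by_contra h
    rw [not_nonempty_iff] at h
    have := hπsum s0
    rw [Finset.univ_eq_empty, Finset.sum_empty] at this; norm_num at this
  obtain ⟨a0⟩ := hA
  have hM : 0 ≤ M := le_trans (abs_nonneg _) (hr s0 a0)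
  have hγ : 0 < 1 - γ := by linarith
  have key : ∀ s a, |occ γ α π T s a - occ γ α π T' s a| ≤
      ∑ s', |occ γ α π T s a * T s a s' - occ γ α π T' s a * T' s a s'| := by
    intro s a
    have h1 : occ γ α π T s a - occ γ α π T' s a =
        ∑ s', (occ γ α π T s a * T s a s' - occ γ α π T' s a * T' s a s') := by
      rw [Finset.sum_sub_distrib, ← Finset.mul_sum, ← Finset.mul_sum, hTsum, hT'sum]
      ring
    rw [h1]
    exact Finset.abs_sum_le_sum_abs _ _
  have total : ∑ s, ∑ a, |occ γ α π T s a - occ γ α π T' s a| ≤ 2 * ε := by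
    calc ∑ s, ∑ a, |occ γ α π T s a - occ γ α π T' s a|
        ≤ ∑ s, ∑ a, ∑ s', |occ γ α π T s a * T s a s' - occ γ α π T' s a * T' s a s'| := by
          apply Finset.sum_le_sum; intro s _; apply Finset.sum_le_sum; intro a _; exact key s a
      _ ≤ 2 * ε := by linarith
  have hdiff : (1 / (1 - γ)) * ∑ s, ∑ a, r s a * occ γ α π T s a
      - (1 / (1 - γ)) * ∑ s, ∑ a, r s a * occ γ α π T' s a
      = (1 / (1 - γ)) * ∑ s, ∑ a, r s a * (occ γ α π T s a - occ γ α π T' s a) := by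
    rw [← mul_sub, ← Finset.sum_sub_distrib]
    congr 1; apply Finset.sum_congr rfl; intro s _
    rw [← Finset.sum_sub_distrib]; apply Finset.sum_congr rfl; intro a _; ring
  rw [hdiff, abs_mul, abs_of_pos (by positivity : (0:ℝ) < 1/(1-γ))]
  have hbound : |∑ s, ∑ a, r s a * (occ γ α π T s a - occ γ α π T' s a)| ≤ M * (2 * ε) := by
    calc |∑ s, ∑ a, r s a * (occ γ α π T s a - occ γ α π T' s a)|
        ≤ ∑ s, ∑ a, |r s a * (occ γ α π T s a - occ γ α π T' s a)| := by
          refine (Finset.abs_sum_le_sum_abs _ _).trans ?_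
          apply Finset.sum_le_sum; intro s _; exact Finset.abs_sum_le_sum_abs _ _
      _ ≤ ∑ s, ∑ a, M * |occ γ α π T s a - occ γ α π T' s a| := by
          apply Finset.sum_le_sum; intro s _; apply Finset.sum_le_sum; intro a _
          rw [abs_mul]; exact mul_le_mul_of_nonneg_right (hr s a) (abs_nonneg _)
      _ = M * ∑ s, ∑ a, |occ γ α π T s a - occ γ α π T' s a| := by
          rw [Finset.mul_sum]; apply Finset.sum_congr rfl; intros; rw [Finset.mul_sum]
      _ ≤ M * (2 * ε) := mul_le_mul_of_nonneg_left total hM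
  calc (1/(1-γ)) * |∑ s, ∑ a, r s a * (occ γ α π T s a - occ γ α π T' s a)|
      ≤ (1/(1-γ)) * (M * (2*ε)) := mul_le_mul_of_nonneg_left hbound (by positivity)
    _ = 2 * ε * M / (1 - γ) := by field_simp
end

section
/- Sequence-level coefficient bound underlying Lemma 2: for 0 < β < γ < 1, (1/2) ∑_{i=0}^∞ |(1−γ)γ^i − ∑_{j=0}^i (1−γ)γ^{i−j}(1−β)β^j| ≤ (1−γ)β/(γ−β). -/
/-- Sequence-level coefficient bound underlying Lemma 2: for `0 < β < γ < 1`,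
`(1/2) ∑_i |(1-γ)γ^i - ∑_{j=0}^i (1-γ)γ^{i-j}(1-β)β^j| ≤ (1-γ)β/(γ-β)`. -/
theorem geometric_mixture_l1_bound
    (γ β : ℝ) (hβ0 : 0 < β) (hβγ : β < γ) (hγ1 : γ < 1) :
    (1 / 2) * ∑' i : ℕ,
        |(1 - γ) * γ ^ i
          - ∑ j ∈ Finset.range (i + 1), (1 - γ) * γ ^ (i - j) * (1 - β) * β ^ j|
      ≤ (1 - γ) * β / (γ - β) := by
  have hγ0 : 0 < γ := hβ0.trans hβγ
  have hβ1 : β < 1 := hβγ.trans hγ1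
  have hne : γ - β ≠ 0 := by linarith
  set c : ℝ := (1 - γ) * β / (γ - β) with hc
  have hc0 : 0 ≤ c := by
    apply div_nonneg <;> nlinarith
  -- closed form of each term
  have key : ∀ i : ℕ,
      (1 - γ) * γ ^ i
        - ∑ j ∈ Finset.range (i + 1), (1 - γ) * γ ^ (i - j) * (1 - β) * β ^ j
      = c * ((1 - β) * β ^ i - (1 - γ) * γ ^ i) := by
    intro i
    have hS : (∑ j ∈ Finset.range (i + 1), β ^ j * γ ^ (i - j)) * (β - γ)
        = β ^ (i + 1) - γ ^ (i + 1) := by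
      simpa using geom_sum₂_mul β γ (i + 1)
    have hrw : ∑ j ∈ Finset.range (i + 1), (1 - γ) * γ ^ (i - j) * (1 - β) * β ^ j
        = (1 - γ) * (1 - β) * ∑ j ∈ Finset.range (i + 1), β ^ j * γ ^ (i - j) := by
      rw [Finset.mul_sum]; apply Finset.sum_congr rfl; intro j _; ring
    have hSval : (∑ j ∈ Finset.range (i + 1), β ^ j * γ ^ (i - j))
        = (γ ^ (i + 1) - β ^ (i + 1)) / (γ - β) := by
      rw [eq_div_iff hne]; linarith [hS]
    rw [hrw, hSval, hc]
    field_simp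
    ring
  have hbound : ∀ i : ℕ,
      |(1 - γ) * γ ^ i
        - ∑ j ∈ Finset.range (i + 1), (1 - γ) * γ ^ (i - j) * (1 - β) * β ^ j|
      ≤ c * ((1 - β) * β ^ i + (1 - γ) * γ ^ i) := by
    intro i
    rw [key i, abs_mul, abs_of_nonneg hc0]
    have h1 : (0:ℝ) ≤ (1 - β) * β ^ i := mul_nonneg (by linarith) (pow_nonneg hβ0.le i)
    have h2 : (0:ℝ) ≤ (1 - γ) * γ ^ i := mul_nonneg (by linarith) (pow_nonneg hγ0.le i)
    have : |(1 - β) * β ^ i - (1 - γ) * γ ^ i| ≤ (1 - β) * β ^ i + (1 - γ) * γ ^ i := by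
      rw [abs_le]; constructor <;> linarith
    nlinarith
  have hsumβ : Summable (fun i : ℕ => β ^ i) :=
    summable_geometric_of_lt_one hβ0.le hβ1
  have hsumγ : Summable (fun i : ℕ => γ ^ i) :=
    summable_geometric_of_lt_one hγ0.le hγ1
  have hsumB : Summable (fun i : ℕ => c * ((1 - β) * β ^ i + (1 - γ) * γ ^ i)) := by
    apply Summable.mul_left
    exact ((hsumβ.mul_left _).add (hsumγ.mul_left _))
  have hsumA : Summable (fun i : ℕ =>
      |(1 - γ) * γ ^ i
        - ∑ j ∈ Finset.range (i + 1), (1 - γ) * γ ^ (i - j) * (1 - β) * β ^ j|) :=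
    Summable.of_nonneg_of_le (fun i => abs_nonneg _) hbound hsumB
  have hle := Summable.tsum_le_tsum hbound hsumA hsumB
  have hBval : ∑' i : ℕ, c * ((1 - β) * β ^ i + (1 - γ) * γ ^ i) = 2 * c := by
    rw [tsum_mul_left, Summable.tsum_add (hsumβ.mul_left _) (hsumγ.mul_left _),
        tsum_mul_left, tsum_mul_left, tsum_geometric_of_lt_one hβ0.le hβ1,
        tsum_geometric_of_lt_one hγ0.le hγ1,
        mul_inv_cancel₀ (show (1:ℝ) - β ≠ 0 by linarith),
        mul_inv_cancel₀ (show (1:ℝ) - γ ≠ 0 by linarith)]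
    ring
  rw [hBval] at hle
  linarith
end
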